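/- Under Assumptions A1–A5 (in particular A4: X^⊤ M X = M), the operators S := −I + α (M + X^⊤ M X) T Ã^{-1} T^⊤ and d := α X^⊤ (M + X^⊤ M X) T Ã^{-1} f simplify to S = −I + 2α M T Ã^{-1} T^⊤ and d = 2α X^⊤ M T Ã^{-1} f, where Ã := A + α T^⊤ M T. Moreover, for any (v, σ) ∈ U × Λ* satisfying the homogeneous equation A v − T^⊤ σ = 0, the scattering operator maps the incoming impedance trace to the outgoing one: S (α M T v + σ) = α M T v − σ. -/

import Mathlib

/-- The transpose (dual map) `B^⊤ : Y* → X*` of a bounded linear operator `B : X → Y`. -/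
noncomputable def trOp {X Y : Type*} [NormedAddCommGroup X] [NormedSpace ℂ X]
    [NormedAddCommGroup Y] [NormedSpace ℂ Y] (B : X →L[ℂ] Y) :
    (Y →L[ℂ] ℂ) →L[ℂ] (X →L[ℂ] ℂ) :=
  (ContinuousLinearMap.compL ℂ X Y ℂ).flip B

/-!
With `X^⊤ M X = M` the operator `M + X^⊤ M X` is just `2M`. For the scattering property,
`A v = T^⊤ σ` says exactly that `Ã v = T^⊤ (α M T v + σ)`, so `Ã⁻¹ T^⊤` sends the incoming trace
back to `v`, and `S (α M T v + σ) = -(α M T v + σ) + 2α M T v`.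
-/

section Scattering

variable {U Λ : Type*} [NormedAddCommGroup U] [NormedSpace ℂ U]
  [NormedAddCommGroup Λ] [NormedSpace ℂ Λ]

theorem inverse_trOp_impedance_trace {A : U →L[ℂ] (U →L[ℂ] ℂ)} {T : U →L[ℂ] Λ}
    {M : Λ →L[ℂ] (Λ →L[ℂ] ℂ)} {α : ℂ} {Atinv : (U →L[ℂ] ℂ) →L[ℂ] U}
    (hAt : ∀ u : U, Atinv ((A + α • (trOp T).comp (M.comp T)) u) = u)
    {v : U} {σ : Λ →L[ℂ] ℂ} (hv : A v = trOp T σ) :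
    Atinv (trOp T (α • M (T v) + σ)) = v := by
  have hAt_v : (A + α • (trOp T).comp (M.comp T)) v = trOp T (α • M (T v) + σ) := by
    simp only [add_apply, smul_apply, ContinuousLinearMap.coe_comp, Function.comp_apply, hv,
      map_add, map_smul]
    exact add_comm _ _
  rw [← hAt_v, hAt]

theorem scattering_apply_incoming_trace {A : U →L[ℂ] (U →L[ℂ] ℂ)} {T : U →L[ℂ] Λ}
    {M : Λ →L[ℂ] (Λ →L[ℂ] ℂ)} {α : ℂ} {Atinv : (U →L[ℂ] ℂ) →L[ℂ] U}
    (hAt : ∀ u : U, Atinv ((A + α • (trOp T).comp (M.comp T)) u) = u)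
    {v : U} {σ : Λ →L[ℂ] ℂ} (hv : A v = trOp T σ) :
    (-(ContinuousLinearMap.id ℂ (Λ →L[ℂ] ℂ)) +
        (2 * α) • ((M.comp T).comp (Atinv.comp (trOp T)))) (α • M (T v) + σ) =
      α • M (T v) - σ := by
  simp only [add_apply, neg_apply, ContinuousLinearMap.id_apply, smul_apply,
    ContinuousLinearMap.coe_comp, Function.comp_apply, inverse_trOp_impedance_trace hAt hv]
  rw [two_mul, add_smul α α (M (T v))]
  abel

end Scattering

theorem statement9
    {U Lam : Type*}
    [NormedAddCommGroup U] [InnerProductSpace ℂ U]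
    [NormedAddCommGroup Lam] [InnerProductSpace ℂ Lam]
    (T : U →L[ℂ] Lam) (X : Lam →L[ℂ] Lam)
    (A : U →L[ℂ] (U →L[ℂ] ℂ)) (f : U →L[ℂ] ℂ)
    (α : ℂ)
    (M : Lam →L[ℂ] (Lam →L[ℂ] ℂ))
    -- Assumption A4
    (hA4 : (trOp X).comp (M.comp X) = M)
    -- Assumption A5: `Ã = A + α T^⊤ M T` has a bounded inverse
    (Atinv : (U →L[ℂ] ℂ) →L[ℂ] U)
    (hAt_l : ∀ u : U, Atinv ((A + α • ((trOp T).comp (M.comp T))) u) = u) :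
    -- the scattering operator simplifies
    (-(ContinuousLinearMap.id ℂ (Lam →L[ℂ] ℂ)) +
        α • (((M + (trOp X).comp (M.comp X)).comp T).comp (Atinv.comp (trOp T))) =
      -(ContinuousLinearMap.id ℂ (Lam →L[ℂ] ℂ)) +
        (2 * α) • ((M.comp T).comp (Atinv.comp (trOp T)))) ∧
    -- the data simplify
    (α • trOp X ((M + (trOp X).comp (M.comp X)) (T (Atinv f))) =
      (2 * α) • trOp X (M (T (Atinv f)))) ∧
    -- scattering property
    (∀ (v : U) (σ : Lam →L[ℂ] ℂ), A v - trOp T σ = 0 →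
      (-(ContinuousLinearMap.id ℂ (Lam →L[ℂ] ℂ)) +
        (2 * α) • ((M.comp T).comp (Atinv.comp (trOp T)))) (α • M (T v) + σ) =
      α • M (T v) - σ) := by
  have hN : M + (trOp X).comp (M.comp X) = (2 : ℂ) • M := by rw [hA4, ← two_smul ℂ M]
  refine ⟨?_, ?_, fun v σ hvσ => scattering_apply_incoming_trace hAt_l (sub_eq_zero.mp hvσ)⟩
  · rw [hN, ContinuousLinearMap.smul_comp, ContinuousLinearMap.smul_comp, smul_smul, mul_comm]
  · rw [hN, smul_apply, map_smul, smul_smul, mul_comm]
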